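/- Let f : ℝ² → ℝ be a non-degenerate weighted homogeneous polynomial of type (d; w₁, w₂) with w₁ ≥ w₂, and suppose there is a neighborhood U of the origin such that every (x₁, x₂) ∈ U with ∂f/∂x₁(x₁, x₂) = 0 satisfies x₂ = 0. Then the Łojasiewicz exponent of f equals L(f) = (d − w₁)/w₂. -/

import Mathlib

/-!
Write `x = t • u` for the weighted dilation `t • (u₁, u₂) = (t ^ w₁ u₁, t ^ w₂ u₂)`, with `u` on
the compact weighted unit sphere `ρ(u) = 1` and `t = ρ(x)`, and put `λ = (d - w₁) / w₂`.
* `|x₁| ^ λ ≤ t ^ (w₁ λ) ≤ t ^ (d - w₂) ≲ ‖∇f(x)‖`: the last step is non-degeneracy on the sphere,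
  and `w₁ λ ≥ d - w₂` because `d ≥ w₁ + w₂` as soon as `d ≠ w₁`.
* `|x₂| ^ λ ≲ |∂f/∂x₁(x)|`: write `∂f/∂x₁ = x₂ ^ m H` with `m` the least power of `x₂` occurring;
  the hypothesis on the zeros of `∂f/∂x₁` makes `H` nonvanishing on the sphere, and `m ≤ λ`.
Conversely, the gradient is `O(y ^ λ)` along the curve `(0, y)`, so no smaller exponent works.
If `d = w₁`, then `∂f/∂x₁` is a nonzero constant and the exponent is `0`.
-/

open MvPolynomial

/-- Euclidean norm of the gradient of a polynomial `f` at `x`. -/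
noncomputable def gradNorm {n : ℕ} (f : MvPolynomial (Fin n) ℝ) (x : Fin n → ℝ) : ℝ :=
  Real.sqrt (∑ i, (eval x (pderiv i f)) ^ 2)

/-- Euclidean norm on `Fin n → ℝ`. -/
noncomputable def eNorm {n : ℕ} (x : Fin n → ℝ) : ℝ :=
  Real.sqrt (∑ i, (x i) ^ 2)

/-- `f` is weighted homogeneous of type `(d; w)`: every monomial `x^α` appearing in `f`
satisfies `∑ i, α i * w i = d`. -/
def IsWeightedHomog {n : ℕ} (f : MvPolynomial (Fin n) ℝ) (w : Fin n → ℕ) (d : ℕ) : Prop :=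
  ∀ α ∈ f.support, ∑ i, α i * w i = d

/-- `f` is non-degenerate (isolated singularity at the origin): in some neighborhood of `0`
the gradient of `f` vanishes only at the origin. -/
def Nondeg {n : ℕ} (f : MvPolynomial (Fin n) ℝ) : Prop :=
  ∃ U ∈ nhds (0 : Fin n → ℝ), ∀ x ∈ U, (∀ i, eval x (pderiv i f) = 0) → x = 0

/-- The Łojasiewicz inequality `‖∇f(x)‖ ≥ C ‖x‖^lam` holds near `0` for some `C > 0`. -/
def LojIneq {n : ℕ} (f : MvPolynomial (Fin n) ℝ) (lam : ℝ) : Prop :=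
  ∃ C > (0 : ℝ), ∃ U ∈ nhds (0 : Fin n → ℝ), ∀ x ∈ U, C * eNorm x ^ lam ≤ gradNorm f x

/-- The Łojasiewicz exponent of `f`: the infimum of all `lam > 0` for which the
Łojasiewicz inequality holds near the origin. -/
noncomputable def lojExp {n : ℕ} (f : MvPolynomial (Fin n) ℝ) : ℝ :=
  sInf {lam : ℝ | 0 < lam ∧ LojIneq f lam}

/-- The weighted "radius" `ρ(x) = (∑ i |x i| ^ (2 / w i)) ^ (1/2)`. -/
noncomputable def rho {n : ℕ} (w : Fin n → ℕ) (x : Fin n → ℝ) : ℝ :=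
  Real.sqrt (∑ i, |x i| ^ ((2 : ℝ) / (w i : ℝ)))

/-- The weighted norm of the gradient:
`‖grad_w f(x)‖_w = (∑ i ρ(x)^(2 wᵢ) |∂f/∂xᵢ(x)|²)^(1/2)`. -/
noncomputable def wGradNorm {n : ℕ} (w : Fin n → ℕ) (f : MvPolynomial (Fin n) ℝ)
    (x : Fin n → ℝ) : ℝ :=
  Real.sqrt (∑ i, rho w x ^ (2 * w i) * (eval x (pderiv i f)) ^ 2)

open Filter Topology

section WeightedScale

variable {n : ℕ}

def weightedScale (w : Fin n → ℕ) (t : ℝ) (x : Fin n → ℝ) : Fin n → ℝ :=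
  fun i => t ^ w i * x i

lemma weightedScale_apply (w : Fin n → ℕ) (t : ℝ) (x : Fin n → ℝ) (i : Fin n) :
    weightedScale w t x i = t ^ w i * x i := rfl

lemma weightedScale_weightedScale (w : Fin n → ℕ) (s t : ℝ) (x : Fin n → ℝ) :
    weightedScale w s (weightedScale w t x) = weightedScale w (s * t) x := by
  ext i
  simp only [weightedScale_apply, mul_pow, mul_assoc]

lemma weightedScale_one (w : Fin n → ℕ) (x : Fin n → ℝ) : weightedScale w 1 x = x := by
  ext i
  simp [weightedScale_apply]

lemma weightedScale_zero_left {w : Fin n → ℕ} (hw : ∀ i, 0 < w i) (x : Fin n → ℝ) :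
    weightedScale w 0 x = 0 := by
  ext i
  simp [weightedScale_apply, (hw i).ne']

lemma weightedScale_eq_zero_iff (w : Fin n → ℕ) {t : ℝ} (ht : t ≠ 0) {x : Fin n → ℝ} :
    weightedScale w t x = 0 ↔ x = 0 := by
  simp only [funext_iff, weightedScale_apply, Pi.zero_apply, mul_eq_zero, pow_eq_zero_iff',
    ht, false_and, false_or]

lemma continuous_weightedScale (w : Fin n → ℕ) (x : Fin n → ℝ) :
    Continuous fun t => weightedScale w t x := by
  unfold weightedScale
  fun_prop

lemma forall_of_eventually_nhds_zero {w : Fin n → ℕ} (hw : ∀ i, 0 < w i)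
    {P : (Fin n → ℝ) → Prop} (hP : ∀ t > 0, ∀ x, P (weightedScale w t x) → P x)
    (h : ∀ᶠ x in 𝓝 0, P x) (x : Fin n → ℝ) : P x := by
  have hlim : Tendsto (fun t => weightedScale w t x) (𝓝[>] 0) (𝓝 0) := by
    have := (continuous_weightedScale w x).tendsto 0
    rw [weightedScale_zero_left hw] at this
    exact this.mono_left nhdsWithin_le_nhds
  obtain ⟨t, hPt, ht⟩ := ((hlim.eventually h).and self_mem_nhdsWithin).exists
  exact hP t ht x hPt

end WeightedScale

section Homogeneous

variable {n : ℕ} {w : Fin n → ℕ}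

lemma IsWeightedHomog.eval_weightedScale {g : MvPolynomial (Fin n) ℝ} {e : ℕ}
    (hg : IsWeightedHomog g w e) (t : ℝ) (x : Fin n → ℝ) :
    eval (weightedScale w t x) g = t ^ e * eval x g := by
  rw [eval_eq', eval_eq', Finset.mul_sum]
  refine Finset.sum_congr rfl fun α hα => ?_
  simp only [weightedScale_apply, mul_pow, Finset.prod_mul_distrib, ← pow_mul,
    Finset.prod_pow_eq_pow_sum, mul_comm (w _), hg α hα]
  ring

lemma add_weight_eq_of_mem_support_pderiv {f : MvPolynomial (Fin n) ℝ} {d : ℕ}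
    (hf : IsWeightedHomog f w d) {i : Fin n} {α : Fin n →₀ ℕ}
    (hα : α ∈ (pderiv i f).support) : ∑ j, α j * w j + w i = d := by
  rw [mem_support_iff, coeff_pderiv] at hα
  have h := hf (α + Finsupp.single i 1) (mem_support_iff.mpr (left_ne_zero_of_mul hα))
  simpa [add_mul, Finset.sum_add_distrib, Finsupp.single_apply] using h

lemma isWeightedHomog_pderiv {f : MvPolynomial (Fin n) ℝ} {d : ℕ}
    (hf : IsWeightedHomog f w d) (i : Fin n) : IsWeightedHomog (pderiv i f) w (d - w i) :=
  fun α hα => by have := add_weight_eq_of_mem_support_pderiv hf hα; omega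

lemma IsWeightedHomog.apply_eq_zero_of_eval_eq_zero {g : MvPolynomial (Fin n) ℝ} {e : ℕ}
    (hg : IsWeightedHomog g w e) (hw : ∀ i, 0 < w i)
    {i : Fin n} (h : ∀ᶠ x in 𝓝 0, eval x g = 0 → x i = 0) {x : Fin n → ℝ}
    (hx : eval x g = 0) : x i = 0 := by
  refine forall_of_eventually_nhds_zero hw (fun t ht x hPt hx => ?_) h x hx
  have hscaled := hPt (by rw [hg.eval_weightedScale, hx, mul_zero])
  rw [weightedScale_apply] at hscaled
  exact (mul_eq_zero.mp hscaled).resolve_left (pow_ne_zero _ ht.ne')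

end Homogeneous

section WeightedRadius

variable {n : ℕ} {w : Fin n → ℕ}

lemma rho_weightedScale (hw : ∀ i, 0 < w i) {t : ℝ} (ht : 0 ≤ t) (x : Fin n → ℝ) :
    rho w (weightedScale w t x) = t * rho w x := by
  have hterm : ∀ i, |t ^ w i * x i| ^ ((2 : ℝ) / w i) = t ^ 2 * |x i| ^ ((2 : ℝ) / w i) := by
    intro i
    have hwi : (w i : ℝ) ≠ 0 := by exact_mod_cast (hw i).ne'
    rw [abs_mul, abs_of_nonneg (pow_nonneg ht _), Real.mul_rpow (pow_nonneg ht _) (abs_nonneg _),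
      ← Real.rpow_natCast, ← Real.rpow_mul ht, mul_div_cancel₀ _ hwi]
    norm_cast
  simp only [rho, weightedScale_apply, hterm, ← Finset.mul_sum]
  rw [Real.sqrt_mul (sq_nonneg t), Real.sqrt_sq ht]

lemma rho_zero (hw : ∀ i, 0 < w i) : rho w 0 = 0 := by
  simpa [weightedScale_zero_left hw] using rho_weightedScale hw le_rfl (0 : Fin n → ℝ)

lemma continuous_rho : Continuous (rho w) := by
  unfold rho
  refine Real.continuous_sqrt.comp (continuous_finsetSum _ fun i _ => ?_)
  exact (continuous_apply i).abs.rpow_const fun _ => Or.inr (by positivity)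

lemma abs_le_rho_pow (hw : ∀ i, 0 < w i) (x : Fin n → ℝ) (i : Fin n) :
    |x i| ≤ rho w x ^ w i := by
  have hexp : (0 : ℝ) < 2 / w i := by have := hw i; positivity
  have hwi : (w i : ℝ) ≠ 0 := by exact_mod_cast (hw i).ne'
  rw [rho, ← Real.rpow_le_rpow_iff (abs_nonneg _) (pow_nonneg (Real.sqrt_nonneg _) _) hexp,
    ← Real.rpow_natCast, ← Real.rpow_mul (Real.sqrt_nonneg _), mul_div_cancel₀ _ hwi,
    Real.rpow_two, Real.sq_sqrt (Finset.sum_nonneg fun j _ => by positivity)]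
  exact Finset.single_le_sum (f := fun j => |x j| ^ ((2 : ℝ) / w j))
    (fun j _ => by positivity) (Finset.mem_univ i)

lemma eq_zero_of_rho_eq_zero (hw : ∀ i, 0 < w i) {x : Fin n → ℝ} (hx : rho w x = 0) :
    x = 0 := by
  ext i
  have := abs_le_rho_pow hw x i
  rw [hx, zero_pow (hw i).ne'] at this
  simpa using this

lemma rho_pos (hw : ∀ i, 0 < w i) {x : Fin n → ℝ} (hx : x ≠ 0) : 0 < rho w x :=
  (Real.sqrt_nonneg _).lt_of_ne' fun h => hx (eq_zero_of_rho_eq_zero hw h)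

lemma isCompact_rho_eq_one (hw : ∀ i, 0 < w i) : IsCompact {u : Fin n → ℝ | rho w u = 1} := by
  refine (isCompact_closedBall (0 : Fin n → ℝ) 1).of_isClosed_subset
    (isClosed_eq continuous_rho continuous_const) fun u (hu : rho w u = 1) => ?_
  rw [mem_closedBall_zero_iff, pi_norm_le_iff_of_nonneg zero_le_one]
  intro i
  simpa [hu] using abs_le_rho_pow hw u i

lemma exists_rho_eq_one_and_weightedScale_eq (hw : ∀ i, 0 < w i) {x : Fin n → ℝ}
    (hx : x ≠ 0) : ∃ u, rho w u = 1 ∧ weightedScale w (rho w x) u = x := by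
  have hρ := rho_pos hw hx
  refine ⟨weightedScale w (rho w x)⁻¹ x, ?_, ?_⟩
  · rw [rho_weightedScale hw (inv_nonneg.mpr hρ.le), inv_mul_cancel₀ hρ.ne']
  · rw [weightedScale_weightedScale, mul_inv_cancel₀ hρ.ne', weightedScale_one]

lemma exists_pos_le_abs_of_rho_eq_one (hw : ∀ i, 0 < w i) {h : (Fin n → ℝ) → ℝ}
    (hc : Continuous h) (hne : ∀ u, rho w u = 1 → h u ≠ 0) :
    ∃ δ > 0, ∀ u, rho w u = 1 → δ ≤ |h u| :=
  (isCompact_rho_eq_one hw).exists_forall_le' hc.abs.continuousOn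
    fun u hu => abs_pos.mpr (hne u hu)

lemma eventually_rho_le_one (hw : ∀ i, 0 < w i) : ∀ᶠ x in 𝓝 (0 : Fin n → ℝ), rho w x ≤ 1 :=
  (continuous_rho.continuousAt.eventually_lt continuousAt_const
    (by rw [rho_zero hw]; exact one_pos)).mono fun _ => le_of_lt

end WeightedRadius

section GradNorm

variable {n : ℕ}

lemma continuous_gradNorm (f : MvPolynomial (Fin n) ℝ) : Continuous (gradNorm f) := by
  unfold gradNorm
  refine Real.continuous_sqrt.comp (continuous_finsetSum _ fun i _ => ?_)
  exact (MvPolynomial.continuous_eval _).pow 2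

lemma abs_eval_pderiv_le_gradNorm (f : MvPolynomial (Fin n) ℝ) (x : Fin n → ℝ) (i : Fin n) :
    |eval x (pderiv i f)| ≤ gradNorm f x := by
  rw [gradNorm, ← Real.sqrt_sq_eq_abs]
  exact Real.sqrt_le_sqrt (Finset.single_le_sum (f := fun j => eval x (pderiv j f) ^ 2)
    (fun j _ => sq_nonneg _) (Finset.mem_univ i))

variable {w : Fin n → ℕ} {f : MvPolynomial (Fin n) ℝ} {d e : ℕ} {t : ℝ}

lemma IsWeightedHomog.gradNorm_weightedScale_le (hf : IsWeightedHomog f w d) (ht0 : 0 ≤ t)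
    (ht1 : t ≤ 1) (he : ∀ i, e ≤ d - w i) (x : Fin n → ℝ) :
    gradNorm f (weightedScale w t x) ≤ t ^ e * gradNorm f x := by
  rw [gradNorm, gradNorm, ← Real.sqrt_sq (pow_nonneg ht0 e), ← Real.sqrt_mul (sq_nonneg _),
    Finset.mul_sum]
  refine Real.sqrt_le_sqrt (Finset.sum_le_sum fun i _ => ?_)
  rw [(isWeightedHomog_pderiv hf i).eval_weightedScale, mul_pow]
  exact mul_le_mul_of_nonneg_right (pow_le_pow_left₀ (pow_nonneg ht0 _)
    (pow_le_pow_of_le_one ht0 ht1 (he i)) 2) (sq_nonneg _)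

lemma IsWeightedHomog.le_gradNorm_weightedScale (hf : IsWeightedHomog f w d) (ht0 : 0 ≤ t)
    (ht1 : t ≤ 1) (he : ∀ i, d - w i ≤ e) (x : Fin n → ℝ) :
    t ^ e * gradNorm f x ≤ gradNorm f (weightedScale w t x) := by
  rw [gradNorm, gradNorm, ← Real.sqrt_sq (pow_nonneg ht0 e), ← Real.sqrt_mul (sq_nonneg _),
    Finset.mul_sum]
  refine Real.sqrt_le_sqrt (Finset.sum_le_sum fun i _ => ?_)
  rw [(isWeightedHomog_pderiv hf i).eval_weightedScale, mul_pow]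
  exact mul_le_mul_of_nonneg_right (pow_le_pow_left₀ (pow_nonneg ht0 _)
    (pow_le_pow_of_le_one ht0 ht1 (he i)) 2) (sq_nonneg _)

lemma IsWeightedHomog.eq_zero_of_forall_eval_pderiv_eq_zero (hf : IsWeightedHomog f w d)
    (hw : ∀ i, 0 < w i) (hnd : Nondeg f) {x : Fin n → ℝ}
    (hx : ∀ i, eval x (pderiv i f) = 0) : x = 0 := by
  obtain ⟨U, hU, hzero⟩ := hnd
  refine forall_of_eventually_nhds_zero hw (fun t ht x hPt hx => ?_)
    (Filter.eventually_of_mem hU hzero) x hx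
  refine (weightedScale_eq_zero_iff w ht.ne').mp (hPt fun i => ?_)
  rw [(isWeightedHomog_pderiv hf i).eval_weightedScale, hx i, mul_zero]

lemma IsWeightedHomog.exists_pos_mul_rho_pow_le_gradNorm (hf : IsWeightedHomog f w d)
    (hw : ∀ i, 0 < w i) (hnd : Nondeg f) (he : ∀ i, d - w i ≤ e) :
    ∃ c > 0, ∀ x ≠ 0, rho w x ≤ 1 → c * rho w x ^ e ≤ gradNorm f x := by
  obtain ⟨c, hc, hcS⟩ := exists_pos_le_abs_of_rho_eq_one hw (continuous_gradNorm f)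
    fun u hu hgrad => by
      have hu0 : u = 0 := hf.eq_zero_of_forall_eval_pderiv_eq_zero hw hnd fun i =>
        abs_nonpos_iff.mp ((abs_eval_pderiv_le_gradNorm f u i).trans hgrad.le)
      rw [hu0, rho_zero hw] at hu
      exact zero_ne_one hu
  refine ⟨c, hc, fun x hx hρ => ?_⟩
  obtain ⟨u, hu, hxu⟩ := exists_rho_eq_one_and_weightedScale_eq hw hx
  have hρ0 := rho_pos hw hx
  calc c * rho w x ^ e ≤ rho w x ^ e * gradNorm f u := by
        rw [mul_comm]
        exact mul_le_mul_of_nonneg_left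
          ((hcS u hu).trans_eq (abs_of_nonneg (Real.sqrt_nonneg _))) (pow_nonneg hρ0.le e)
    _ ≤ gradNorm f (weightedScale w (rho w x) u) := hf.le_gradNorm_weightedScale hρ0.le hρ he u
    _ = gradNorm f x := by rw [hxu]

end GradNorm

section LojasiewiczExponent

variable {n : ℕ} {f : MvPolynomial (Fin n) ℝ}

lemma continuous_eNorm : Continuous (eNorm : (Fin n → ℝ) → ℝ) := by
  unfold eNorm
  fun_prop

lemma eNorm_zero : eNorm (0 : Fin n → ℝ) = 0 := by
  simp [eNorm]

lemma LojIneq.mono {a b : ℝ} (h : LojIneq f a) (ha : 0 ≤ a) (hab : a ≤ b) : LojIneq f b := by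
  obtain ⟨C, hC, U, hU, hineq⟩ := h
  have hsmall : ∀ᶠ x in 𝓝 (0 : Fin n → ℝ), eNorm x ≤ 1 :=
    (continuous_eNorm.continuousAt.eventually_lt continuousAt_const
      (by rw [eNorm_zero]; exact one_pos)).mono fun _ => le_of_lt
  obtain ⟨V, hV, hVsmall⟩ := Filter.eventually_iff_exists_mem.mp hsmall
  refine ⟨C, hC, U ∩ V, Filter.inter_mem hU hV, fun x ⟨hxU, hxV⟩ => ?_⟩
  calc C * eNorm x ^ b ≤ C * eNorm x ^ a := mul_le_mul_of_nonneg_left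
        (Real.rpow_le_rpow_of_exponent_ge' (Real.sqrt_nonneg _) (hVsmall x hxV) ha hab) hC.le
    _ ≤ gradNorm f x := hineq x hxU

lemma lojExp_eq_of_lojIneq {lam₀ : ℝ} (h₀ : 0 ≤ lam₀) (hloj : LojIneq f lam₀)
    (hmin : ∀ lam, LojIneq f lam → lam₀ ≤ lam) : lojExp f = lam₀ := by
  have hbdd : BddBelow {lam : ℝ | 0 < lam ∧ LojIneq f lam} := ⟨lam₀, fun lam h => hmin lam h.2⟩
  refine le_antisymm ?_ (le_csInf ⟨lam₀ + 1, by linarith, hloj.mono h₀ (by linarith)⟩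
    fun lam h => hmin lam h.2)
  calc lojExp f ≤ sInf (Set.Ioi lam₀) := csInf_le_csInf hbdd Set.nonempty_Ioi
        fun lam (h : lam₀ < lam) => ⟨h₀.trans_lt h, hloj.mono h₀ h.le⟩
    _ = lam₀ := csInf_Ioi

lemma lojIneq_zero_of_gradNorm_pos (h : 0 < gradNorm f 0) : LojIneq f 0 := by
  refine ⟨gradNorm f 0 / 2, half_pos h, Filter.eventually_iff_exists_mem.mp ?_⟩
  filter_upwards [continuousAt_const.eventually_lt (continuous_gradNorm f).continuousAt
    (half_lt_self h)] with x hx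
  simpa using hx.le

lemma le_of_eventually_mul_rpow_le {C K a b : ℝ} (hC : 0 < C)
    (h : ∀ᶠ y in 𝓝[>] (0 : ℝ), C * y ^ a ≤ K * y ^ b) : b ≤ a := by
  by_contra! hab
  have hlim : Tendsto (fun y : ℝ => K * y ^ (b - a)) (𝓝[>] 0) (𝓝 0) := by
    have := ((Real.continuousAt_rpow_const 0 (b - a)
      (Or.inr (sub_pos.mpr hab).le)).tendsto).const_mul K
    rw [Real.zero_rpow (sub_pos.mpr hab).ne', mul_zero] at this
    exact this.mono_left nhdsWithin_le_nhds
  refine hC.not_ge (ge_of_tendsto hlim ?_)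
  filter_upwards [h, self_mem_nhdsWithin] with y hy (hy0 : 0 < y)
  rwa [Real.rpow_sub hy0, mul_div_assoc', le_div_iff₀ (Real.rpow_pos_of_pos hy0 a)]

end LojasiewiczExponent

section Plane

variable {w₁ w₂ d : ℕ} {f : MvPolynomial (Fin 2) ℝ}

lemma eNorm_le_two_mul_abs (x : Fin 2 → ℝ) : ∃ i, eNorm x ≤ 2 * |x i| := by
  have h : eNorm x ≤ |x 0| + |x 1| := by
    rw [eNorm, Fin.sum_univ_two, Real.sqrt_le_iff]
    refine ⟨by positivity, ?_⟩
    nlinarith [sq_abs (x 0), sq_abs (x 1), abs_nonneg (x 0), abs_nonneg (x 1)]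
  rcases le_total (|x 0|) (|x 1|) with h | h
  · exact ⟨1, by linarith⟩
  · exact ⟨0, by linarith⟩

lemma lojIneq_of_forall_mul_abs_rpow_le {lam κ : ℝ}
    (hlam : 0 < lam) (hκ : 0 < κ)
    (h : ∀ᶠ x in 𝓝 0, x ≠ 0 → ∀ i, κ * |x i| ^ lam ≤ gradNorm f x) : LojIneq f lam := by
  refine ⟨κ / 2 ^ lam, by positivity, Filter.eventually_iff_exists_mem.mp ?_⟩
  filter_upwards [h] with x hx
  rcases eq_or_ne x 0 with rfl | hx0
  · rw [eNorm_zero, Real.zero_rpow hlam.ne', mul_zero]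
    exact Real.sqrt_nonneg _
  obtain ⟨i, hi⟩ := eNorm_le_two_mul_abs x
  calc κ / 2 ^ lam * eNorm x ^ lam ≤ κ / 2 ^ lam * (2 * |x i|) ^ lam := by
        gcongr
        exact Real.sqrt_nonneg _
    _ = κ * |x i| ^ lam := by
        rw [Real.mul_rpow zero_le_two (abs_nonneg _)]
        field_simp
    _ ≤ gradNorm f x := hx hx0 i

def cofactor (g : MvPolynomial (Fin 2) ℝ) (m : ℕ) (x : Fin 2 → ℝ) : ℝ :=
  ∑ α ∈ g.support, coeff α g * x 0 ^ α 0 * x 1 ^ (α 1 - m)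

lemma continuous_cofactor (g : MvPolynomial (Fin 2) ℝ) (m : ℕ) : Continuous (cofactor g m) := by
  unfold cofactor
  fun_prop

lemma eval_eq_pow_mul_cofactor {g : MvPolynomial (Fin 2) ℝ} {m : ℕ}
    (hm : ∀ α ∈ g.support, m ≤ α 1) (x : Fin 2 → ℝ) : eval x g = x 1 ^ m * cofactor g m x := by
  rw [eval_eq', cofactor, Finset.mul_sum]
  refine Finset.sum_congr rfl fun α hα => ?_
  have hpow : x 1 ^ α 1 = x 1 ^ m * x 1 ^ (α 1 - m) := by
    rw [← pow_add, Nat.add_sub_cancel' (hm α hα)]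
  rw [Fin.prod_univ_two, hpow]
  ring

lemma IsWeightedHomog.cofactor_eq_of_apply_one_eq_zero {g : MvPolynomial (Fin 2) ℝ} {e : ℕ}
    (hg : IsWeightedHomog g ![w₁, w₂] e) (hw₁ : 0 < w₁) {β : Fin 2 →₀ ℕ} (hβ : β ∈ g.support)
    (hmin : ∀ α ∈ g.support, β 1 ≤ α 1) {x : Fin 2 → ℝ} (hx : x 1 = 0) :
    cofactor g (β 1) x = coeff β g * x 0 ^ β 0 := by
  rw [cofactor, Finset.sum_eq_single β]
  · simp
  · intro α hα hne
    have hlt : β 1 < α 1 := by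
      refine (hmin α hα).lt_of_ne fun h1 => hne ?_
      have hα' := hg α hα
      have hβ' := hg β hβ
      simp only [Fin.sum_univ_two, Matrix.cons_val_zero, Matrix.cons_val_one] at hα' hβ'
      rw [h1] at hβ'
      have h0 : α 0 = β 0 := Nat.eq_of_mul_eq_mul_right hw₁ (by omega)
      ext i
      fin_cases i
      exacts [h0, h1.symm]
    rw [hx, zero_pow (Nat.sub_ne_zero_of_lt hlt), mul_zero]
  · exact fun h => absurd hβ h

lemma IsWeightedHomog.cofactor_ne_zero {g : MvPolynomial (Fin 2) ℝ} {e : ℕ}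
    (hg : IsWeightedHomog g ![w₁, w₂] e) (hw₁ : 0 < w₁) {β : Fin 2 →₀ ℕ} (hβ : β ∈ g.support)
    (hmin : ∀ α ∈ g.support, β 1 ≤ α 1) (hzero : ∀ x, eval x g = 0 → x 1 = 0)
    {u : Fin 2 → ℝ} (hu : u ≠ 0) : cofactor g (β 1) u ≠ 0 := by
  intro hH
  by_cases hu1 : u 1 = 0
  · rw [hg.cofactor_eq_of_apply_one_eq_zero hw₁ hβ hmin hu1] at hH
    have hu0 : u 0 = 0 :=
      (pow_eq_zero_iff'.mp ((mul_eq_zero.mp hH).resolve_left (mem_support_iff.mp hβ))).1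
    exact hu (by ext i; fin_cases i; exacts [hu0, hu1])
  · exact hu1 (hzero u (by rw [eval_eq_pow_mul_cofactor hmin, hH, mul_zero]))

lemma IsWeightedHomog.exists_pos_mul_abs_rpow_le_abs_eval {g : MvPolynomial (Fin 2) ℝ}
    {e : ℕ} (hg : IsWeightedHomog g ![w₁, w₂] e) (hw₁ : 0 < w₁) (hw₂ : 0 < w₂)
    (hzero : ∀ x, eval x g = 0 → x 1 = 0) :
    ∃ δ > 0, ∀ x ≠ 0, δ * |x 1| ^ ((e : ℝ) / w₂) ≤ |eval x g| := by
  have hw : ∀ i, 0 < ![w₁, w₂] i := Fin.forall_fin_two.mpr ⟨hw₁, hw₂⟩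
  have hsupp : g.support.Nonempty := by
    refine Finset.nonempty_iff_ne_empty.mpr fun hempty => one_ne_zero (α := ℝ) ?_
    simpa using hzero ![0, 1] (by simp [support_eq_empty.mp hempty])
  obtain ⟨β, hβ, hmin⟩ := g.support.exists_min_image (fun α => α 1) hsupp
  have hfac := eval_eq_pow_mul_cofactor hmin
  have hm : (β 1 : ℝ) ≤ e / w₂ := by
    have hdeg := hg β hβ
    simp only [Fin.sum_univ_two, Matrix.cons_val_zero, Matrix.cons_val_one] at hdeg
    rw [le_div_iff₀ (by exact_mod_cast hw₂)]
    exact_mod_cast (Nat.le_add_left _ _).trans hdeg.le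
  obtain ⟨δ, hδ, hδS⟩ := exists_pos_le_abs_of_rho_eq_one hw (continuous_cofactor g (β 1))
    fun u hu => hg.cofactor_ne_zero hw₁ hβ hmin hzero fun h0 => by
      rw [h0, rho_zero hw] at hu
      exact zero_ne_one hu
  refine ⟨δ, hδ, fun x hx => ?_⟩
  obtain ⟨u, hu, hxu⟩ := exists_rho_eq_one_and_weightedScale_eq hw hx
  have ht := rho_pos hw hx
  generalize rho ![w₁, w₂] x = t at ht hxu
  subst hxu
  have hu1 : |u 1| ≤ 1 := by simpa [hu] using abs_le_rho_pow hw u 1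
  have hx1 : |weightedScale ![w₁, w₂] t u 1| = t ^ w₂ * |u 1| := by
    rw [weightedScale_apply, abs_mul, abs_of_pos (pow_pos ht _)]
    rfl
  calc δ * |weightedScale ![w₁, w₂] t u 1| ^ ((e : ℝ) / w₂)
      = t ^ e * (δ * |u 1| ^ ((e : ℝ) / w₂)) := by
        rw [hx1, Real.mul_rpow (by positivity) (abs_nonneg _), ← Real.rpow_natCast,
          ← Real.rpow_mul ht.le, mul_div_cancel₀ _ (by exact_mod_cast hw₂.ne'),
          Real.rpow_natCast]
        ring
    _ ≤ t ^ e * (|u 1| ^ (β 1) * |cofactor g (β 1) u|) := by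
        gcongr ?_ * ?_
        rw [mul_comm]
        refine mul_le_mul ?_ (hδS u hu) hδ.le (by positivity)
        rw [← Real.rpow_natCast]
        exact Real.rpow_le_rpow_of_exponent_ge' (abs_nonneg _) hu1 (Nat.cast_nonneg _) hm
    _ = |eval (weightedScale ![w₁, w₂] t u) g| := by
        rw [hg.eval_weightedScale, hfac u, abs_mul, abs_mul, abs_pow, abs_pow,
          abs_of_pos ht]

lemma IsWeightedHomog.le_of_lojIneq (hf : IsWeightedHomog f ![w₁, w₂] d) (hw₂ : 0 < w₂)
    (hw : w₂ ≤ w₁) {lam : ℝ} (h : LojIneq f lam) : ((d - w₁ : ℕ) : ℝ) / w₂ ≤ lam := by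
  obtain ⟨C, hC, U, hU, hineq⟩ := h
  refine le_of_eventually_mul_rpow_le hC (K := gradNorm f ![0, 1]) ?_
  have hcurve : Tendsto (fun y : ℝ => (![0, y] : Fin 2 → ℝ)) (𝓝[>] 0) (𝓝 0) := by
    have : Continuous fun y : ℝ => (![0, y] : Fin 2 → ℝ) :=
      continuous_pi fun i => by fin_cases i <;> fun_prop
    exact (this.tendsto' 0 0 (by ext i; fin_cases i <;> rfl)).mono_left nhdsWithin_le_nhds
  filter_upwards [hcurve.eventually (Filter.eventually_of_mem hU fun x hx => hx),
    Ioo_mem_nhdsGT one_pos] with y hyU ⟨hy0, hy1⟩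
  set t := y ^ ((w₂ : ℝ)⁻¹)
  have htw : t ^ w₂ = y := by
    rw [← Real.rpow_natCast, ← Real.rpow_mul hy0.le,
      inv_mul_cancel₀ (by exact_mod_cast hw₂.ne'), Real.rpow_one]
  have hpt : weightedScale ![w₁, w₂] t ![0, 1] = ![0, y] := by
    ext i
    fin_cases i <;> simp [weightedScale_apply, htw]
  have he : ∀ i, d - w₁ ≤ d - ![w₁, w₂] i := by
    intro i
    fin_cases i
    exacts [le_rfl, Nat.sub_le_sub_left hw d]
  calc C * y ^ lam = C * eNorm ![0, y] ^ lam := by simp [eNorm, Real.sqrt_sq hy0.le]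
    _ ≤ gradNorm f ![0, y] := hineq _ hyU
    _ ≤ t ^ (d - w₁) * gradNorm f ![0, 1] := hpt ▸ hf.gradNorm_weightedScale_le
        (by positivity) (Real.rpow_le_one hy0.le hy1.le (by positivity)) he _
    _ = gradNorm f ![0, 1] * y ^ (((d - w₁ : ℕ) : ℝ) / w₂) := by
        rw [← Real.rpow_natCast, ← Real.rpow_mul hy0.le, mul_comm, inv_mul_eq_div]

/-- This is `(w₁ - w₂) (d - w₁ - w₂) ≥ 0`. -/
lemma sub_le_mul_sub_div (hw₂ : 0 < w₂) (hw : w₂ ≤ w₁) (hd : w₁ + w₂ ≤ d) :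
    ((d - w₂ : ℕ) : ℝ) ≤ w₁ * (((d - w₁ : ℕ) : ℝ) / w₂) := by
  have h1 : (w₂ : ℝ) ≤ w₁ := by exact_mod_cast hw
  have h2 : (w₁ : ℝ) + w₂ ≤ d := by exact_mod_cast hd
  rw [Nat.cast_sub (by omega), Nat.cast_sub (by omega), mul_div_assoc',
    le_div_iff₀ (by exact_mod_cast hw₂)]
  nlinarith

lemma IsWeightedHomog.lojIneq_of_add_le (hf : IsWeightedHomog f ![w₁, w₂] d) (hw₂ : 0 < w₂)
    (hw : w₂ ≤ w₁) (hd : w₁ + w₂ ≤ d) (hnd : Nondeg f)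
    (hzero : ∀ x, eval x (pderiv 0 f) = 0 → x 1 = 0) :
    LojIneq f (((d - w₁ : ℕ) : ℝ) / w₂) := by
  have hw₁ := hw₂.trans_le hw
  have hwpos : ∀ i, 0 < ![w₁, w₂] i := Fin.forall_fin_two.mpr ⟨hw₁, hw₂⟩
  have hw₂r : (0 : ℝ) < w₂ := by exact_mod_cast hw₂
  have hlam : (0 : ℝ) < ((d - w₁ : ℕ) : ℝ) / w₂ := by
    apply div_pos _ hw₂r
    exact_mod_cast (by omega : 0 < d - w₁)
  obtain ⟨δ, hδ, hx1⟩ :=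
    (isWeightedHomog_pderiv hf 0).exists_pos_mul_abs_rpow_le_abs_eval hw₁ hw₂ hzero
  obtain ⟨c, hc, hgrad⟩ := hf.exists_pos_mul_rho_pow_le_gradNorm hwpos hnd (e := d - w₂)
    (Fin.forall_fin_two.mpr ⟨Nat.sub_le_sub_left hw d, le_rfl⟩)
  have hexp := sub_le_mul_sub_div hw₂ hw hd
  refine lojIneq_of_forall_mul_abs_rpow_le hlam (lt_min hc hδ) ?_
  filter_upwards [eventually_rho_le_one hwpos] with x hρ hx i
  fin_cases i
  · have hx0 := abs_le_rho_pow hwpos x 0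
    have hρ0 : 0 ≤ rho ![w₁, w₂] x := Real.sqrt_nonneg _
    calc min c δ * |x 0| ^ (((d - w₁ : ℕ) : ℝ) / w₂)
        ≤ c * (rho ![w₁, w₂] x ^ w₁) ^ (((d - w₁ : ℕ) : ℝ) / w₂) := by
          gcongr
          · exact min_le_left _ _
          · exact hx0
      _ ≤ c * rho ![w₁, w₂] x ^ (d - w₂) := by
          gcongr
          rw [← Real.rpow_natCast, ← Real.rpow_mul hρ0, ← Real.rpow_natCast]
          exact Real.rpow_le_rpow_of_exponent_ge' hρ0 hρ (Nat.cast_nonneg _) hexp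
      _ ≤ gradNorm f x := hgrad x hx hρ
  · calc min c δ * |x 1| ^ (((d - w₁ : ℕ) : ℝ) / w₂)
        ≤ δ * |x 1| ^ (((d - w₁ : ℕ) : ℝ) / w₂) := by gcongr; exact min_le_right _ _
      _ ≤ |eval x (pderiv 0 f)| := hx1 x hx
      _ ≤ gradNorm f x := abs_eval_pderiv_le_gradNorm f x 0

lemma IsWeightedHomog.lojIneq_zero (hf : IsWeightedHomog f ![w₁, w₂] w₁) (hw₁ : 0 < w₁)
    (hw₂ : 0 < w₂) (hzero : ∀ x, eval x (pderiv 0 f) = 0 → x 1 = 0) : LojIneq f 0 := by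
  refine lojIneq_zero_of_gradNorm_pos
    ((abs_pos.mpr fun h => ?_).trans_le (abs_eval_pderiv_le_gradNorm f 0 0))
  have hconst := (isWeightedHomog_pderiv hf 0).eval_weightedScale 0 ![0, 1]
  rw [weightedScale_zero_left (Fin.forall_fin_two.mpr ⟨hw₁, hw₂⟩)] at hconst
  rw [h, Matrix.cons_val_zero, Nat.sub_self, pow_zero, one_mul, eq_comm] at hconst
  simpa using hzero ![0, 1] hconst

lemma IsWeightedHomog.eq_or_add_le (hf : IsWeightedHomog f ![w₁, w₂] d) (hw : w₂ ≤ w₁)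
    (h0 : pderiv 0 f ≠ 0) : d = w₁ ∨ w₁ + w₂ ≤ d := by
  obtain ⟨α, hα⟩ := Finset.nonempty_iff_ne_empty.mpr (mt support_eq_empty.mp h0)
  have hdeg := add_weight_eq_of_mem_support_pderiv hf hα
  simp only [Fin.sum_univ_two, Matrix.cons_val_zero, Matrix.cons_val_one] at hdeg
  rcases Nat.eq_zero_or_pos (α 0) with h | h <;> rcases Nat.eq_zero_or_pos (α 1) with h' | h'
  · simp_all
  all_goals right; nlinarith

end Plane

theorem stmt1_general (d w₁ w₂ : ℕ) (hw₂ : 0 < w₂) (hw : w₂ ≤ w₁)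
    (f : MvPolynomial (Fin 2) ℝ)
    (hhom : IsWeightedHomog f ![w₁, w₂] d)
    (hnd : Nondeg f)
    (hcase : ∃ U ∈ nhds (0 : Fin 2 → ℝ), ∀ x ∈ U,
      eval x (pderiv 0 f) = 0 → x 1 = 0) :
    lojExp f = ((d : ℝ) - w₁) / w₂ := by
  have hw₁ := hw₂.trans_le hw
  have hzero : ∀ x, eval x (pderiv 0 f) = 0 → x 1 = 0 := fun x =>
    (isWeightedHomog_pderiv hhom 0).apply_eq_zero_of_eval_eq_zero
      (Fin.forall_fin_two.mpr ⟨hw₁, hw₂⟩) (Filter.eventually_iff_exists_mem.mpr hcase)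
  have hpderiv : pderiv 0 f ≠ 0 := fun h =>
    one_ne_zero (α := ℝ) (by simpa [h] using hzero ![0, 1])
  have hdeg := hhom.eq_or_add_le hw hpderiv
  rw [← Nat.cast_sub (by omega)]
  refine lojExp_eq_of_lojIneq (by positivity) ?_ fun lam => hhom.le_of_lojIneq hw₂ hw
  rcases hdeg with rfl | hd
  · simpa using hhom.lojIneq_zero hw₁ hw₂ hzero
  · exact hhom.lojIneq_of_add_le hw₂ hw hd hnd hzero

theorem stmt1 (d w₁ w₂ : ℕ) (hd : 0 < d) (hw₂ : 0 < w₂) (hw : w₂ ≤ w₁)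
    (f : MvPolynomial (Fin 2) ℝ)
    (hhom : IsWeightedHomog f ![w₁, w₂] d)
    (hnd : Nondeg f)
    (hcase : ∃ U ∈ nhds (0 : Fin 2 → ℝ), ∀ x ∈ U,
      eval x (pderiv 0 f) = 0 → x 1 = 0) :
    lojExp f = ((d : ℝ) - w₁) / w₂ :=
  stmt1_general d w₁ w₂ hw₂ hw f hhom hnd hcase
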